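/- Let C be a separated bornological algebra and τ_C: TC → C the canonical projection from the analytic tensor algebra. Then τ_C preserves spectral radii: ρ(τ_C(S); C) = ρ(S; TC) for every small subset S ⊂ TC. -/

import Mathlib

/-!
STATEMENT 16: For a separated bornological algebra `C`, the canonical projection
`τ_C : 𝒯C → C` from the analytic tensor algebra preserves spectral radii:
`ρ(τ_C(S); C) = ρ(S; 𝒯C)` for every small `S ⊆ 𝒯C`.

The analytic tensor algebra is realized, following Cuntz–Quillen, as the (non-unital
part of the) tensor algebra `T(C)`, with `x₀ dx₁ ⋯ dx₂ₙ` corresponding to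
`x₀ ⊗ ω(x₁,x₂) ⊗ ⋯ ⊗ ω(x₂ₙ₋₁, x₂ₙ)` where `ω(x,y) = x ⊗ y − xy` is the curvature.
Its analytic bornology is generated by the disked hulls of the sets `[S](dSdS)^∞`.
-/

open Bornology Set
open scoped ENNReal Pointwise

/-- `setPow S n` is the set of `(n+1)`-fold products of elements of `S`. -/
def setPow {A : Type} [Mul A] (S : Set A) : ℕ → Set A
  | 0 => S
  | n + 1 => setPow S n * S

/-- The multiplicative closure `S^∞ = ⋃_{n ≥ 1} S^n`. -/
def mulClosure {A : Type} [Mul A] (S : Set A) : Set A := ⋃ n, setPow S n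

/-- A disk: an absolutely convex subset. -/
def IsDisk {V : Type} [AddCommGroup V] [Module ℝ V] (S : Set V) : Prop :=
  Balanced ℝ S ∧ Convex ℝ S

/-- The disked hull. -/
def dhull {V : Type} [AddCommGroup V] [Module ℝ V] (S : Set V) : Set V :=
  convexHull ℝ (balancedHull ℝ S)

/-- Spectral radius with respect to a bornology given as a predicate `small`. -/
noncomputable def specRadP {A : Type} [Mul A] [SMul ℝ A] (small : Set A → Prop)
    (S : Set A) : ℝ≥0∞ :=
  sInf {r : ℝ≥0∞ | ∃ t : ℝ, 0 < t ∧ r = ENNReal.ofReal t ∧ small (mulClosure (t⁻¹ • S))}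

def SeparatedBorn (A : Type) [AddCommGroup A] [Module ℝ A] [Bornology A] : Prop :=
  ∀ W : Submodule ℝ A, Bornology.IsBounded (W : Set A) → W = ⊥

variable (C : Type) [NonUnitalRing C] [Module ℝ C]
  [IsScalarTower ℝ C C] [SMulCommClass ℝ C C] [Bornology C]

/-- The canonical projection `τ_C : T(C) → C` induced by the identity of `C`
(constructed through the unitization of `C`). -/
noncomputable def tauC : TensorAlgebra ℝ C →ₗ[ℝ] C :=
  (Unitization.sndHom ℝ ℝ C).comp
    (TensorAlgebra.lift ℝ (Unitization.inrHom ℝ ℝ C)).toLinearMap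

/-- The set of curvatures `ω(S,S) = {ι(x)ι(y) − ι(xy) | x, y ∈ S}`, corresponding to
`dS dS`. -/
def curvSet (S : Set C) : Set (TensorAlgebra ℝ C) :=
  {w | ∃ x ∈ S, ∃ y ∈ S, w =
    TensorAlgebra.ι ℝ x * TensorAlgebra.ι ℝ y - TensorAlgebra.ι ℝ (x * y)}

/-- The generating set `[S](dSdS)^∞ = S ∪ ⋃ₙ (S·ω(S,S)ⁿ ∪ ω(S,S)ⁿ)` of the analytic
bornology of the analytic tensor algebra `𝒯C`. -/
def anSet (S : Set C) : Set (TensorAlgebra ℝ C) :=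
  (TensorAlgebra.ι ℝ '' S) ∪
    ⋃ n : ℕ, ((TensorAlgebra.ι ℝ '' S) * setPow (curvSet C S) n ∪ setPow (curvSet C S) n)

/-- The analytic bornology of the analytic tensor algebra `𝒯C`: a set is small iff it
is absorbed by the disked hull of some set `[S](dSdS)^∞` with `S ⊆ C` small. -/
def SmallTC (U : Set (TensorAlgebra ℝ C)) : Prop :=
  ∃ (S : Set C) (c : ℝ), IsBounded S ∧ 0 < c ∧ U ⊆ c • dhull (anSet C S)

/-!
Elements of the analytic bornology have no scalar part; `τ` is multiplicative on such elements
and maps the generators `[S](dSdS)^∞` into `S ∪ {0}`. This gives `ρ(τ S) ≤ ρ(S)`.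

Conversely, let `t > ρ(τ S)`, so that `B = (t⁻¹ τ S)^∞` is bounded, and write each factor
`f ∈ t⁻¹ S` as `ι (τ f) + j`, where `j` is a combination of monomials containing at least one
curvature `ω(x, y) = dx dy`. Give a monomial with `L` curvatures the weight `β ^ L`. Since
`ι u ι h = ι (u h) + ω(u, h)`, left multiplication by `ι u` with `u ∈ B` enlarges the disk
spanned by the weighted monomials (with heads and entries in suitable bounded pools) by at most
`1 + β⁻¹`; since `j` raises the number of curvatures, left multiplication by `j` enlarges it by
`O(β⁻¹)`. So `(t⁻¹ S)ⁿ` grows at most like `(1 + O(β⁻¹))ⁿ`, and for `β` large `(t'⁻¹ S)^∞` is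
small for every `t' > t`. Rescaling a monomial by `β ^ L` only rescales its curvature entries,
so the weighted monomials are generators of the analytic bornology.
-/

section AbsConvexHull

variable {V W : Type} [AddCommGroup V] [Module ℝ V] [AddCommGroup W] [Module ℝ W]
  {X : Set V} {a b : ℝ} {x y : V}

theorem dhull_eq_absConvexHull (X : Set V) :
    dhull X = absConvexHull ℝ X :=
  (absConvexHull_eq_convexHull_balancedHull ℝ).symm

theorem mem_one_smul_absConvexHull (hx : x ∈ X) : x ∈ (1 : ℝ) • absConvexHull ℝ X := by
  rw [one_smul]
  exact subset_absConvexHull hx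

theorem smul_absConvexHull_mono (ha : 0 ≤ a) (hab : a ≤ b) :
    a • absConvexHull ℝ X ⊆ b • absConvexHull ℝ X :=
  balanced_absConvexHull.smul_mono <| by
    simpa [Real.norm_eq_abs, abs_of_nonneg ha, abs_of_nonneg (ha.trans hab)] using hab

theorem add_mem_smul_absConvexHull (ha : 0 ≤ a) (hb : 0 ≤ b)
    (hx : x ∈ a • absConvexHull ℝ X) (hy : y ∈ b • absConvexHull ℝ X) :
    x + y ∈ (a + b) • absConvexHull ℝ X := by
  rw [convex_absConvexHull.add_smul ha hb]
  exact Set.add_mem_add hx hy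

theorem sub_mem_two_smul_absConvexHull (hx : x ∈ X) (hy : y ∈ X) :
    x - y ∈ (2 : ℝ) • absConvexHull ℝ X := by
  have hy' : -y ∈ (1 : ℝ) • absConvexHull ℝ X := by
    rw [one_smul, balanced_absConvexHull.neg_mem_iff]
    exact subset_absConvexHull hy
  rw [sub_eq_add_neg, show (2 : ℝ) = 1 + 1 by norm_num]
  exact add_mem_smul_absConvexHull zero_le_one zero_le_one (mem_one_smul_absConvexHull hx) hy'

theorem LinearMap.map_mem_smul_absConvexHull (f : V →ₗ[ℝ] W) {Y : Set W}
    (hf : ∀ x ∈ X, f x ∈ b • absConvexHull ℝ Y) (hx : x ∈ a • absConvexHull ℝ X) :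
    f x ∈ (a * b) • absConvexHull ℝ Y := by
  have hhull : absConvexHull ℝ X ⊆ f ⁻¹' (b • absConvexHull ℝ Y) :=
    absConvexHull_min hf ⟨(balanced_absConvexHull.smul b).mulActionHom_preimage f.toMulActionHom,
      (convex_absConvexHull.smul b).linear_preimage f⟩
  obtain ⟨x, hx, rfl⟩ := hx
  rw [map_smul, mul_smul]
  exact Set.smul_mem_smul_set (hhull hx)

theorem mul_mem_smul_absConvexHull {R : Type} [NonUnitalNonAssocRing R] [Module ℝ R]
    [IsScalarTower ℝ R R] [SMulCommClass ℝ R R] {X Y : Set R} {x y : R}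
    (hx : x ∈ a • absConvexHull ℝ X) (hy : y ∈ b • absConvexHull ℝ Y) :
    x * y ∈ (a * b) • absConvexHull ℝ (X * Y) := by
  refine (LinearMap.mulRight ℝ y).map_mem_smul_absConvexHull (fun x' hx' => ?_) hx
  simpa using (LinearMap.mulLeft ℝ x').map_mem_smul_absConvexHull
    (fun y' hy' => mem_one_smul_absConvexHull (Set.mul_mem_mul hx' hy')) hy

end AbsConvexHull

section SetPow

theorem setPow_eq_pow {M : Type} [Monoid M] (S : Set M) (n : ℕ) : setPow S n = S ^ (n + 1) := by
  induction n with
  | zero => rw [zero_add, pow_one]; rfl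
  | succ n ih => rw [pow_succ, ← ih]; rfl

variable {M : Type} [Semigroup M] {S : Set M}

theorem setPow_succ' (S : Set M) (n : ℕ) : setPow S (n + 1) = S * setPow S n := by
  induction n with
  | zero => rfl
  | succ n ih =>
    calc setPow S (n + 2) = setPow S (n + 1) * S := rfl
      _ = S * (setPow S n * S) := by rw [ih, mul_assoc]
      _ = S * setPow S (n + 1) := rfl

theorem setPow_mul_setPow (n m : ℕ) : setPow S n * setPow S m = setPow S (n + m + 1) := by
  induction m with
  | zero => rfl
  | succ m ih => rw [setPow, ← mul_assoc, ih]; rfl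

theorem mul_mem_mulClosure {x y : M} (hx : x ∈ mulClosure S) (hy : y ∈ mulClosure S) :
    x * y ∈ mulClosure S := by
  obtain ⟨n, hn⟩ := Set.mem_iUnion.1 hx
  obtain ⟨m, hm⟩ := Set.mem_iUnion.1 hy
  refine Set.mem_iUnion.2 ⟨n + m + 1, ?_⟩
  rw [← setPow_mul_setPow]
  exact Set.mul_mem_mul hn hm

theorem image_setPow {M N F : Type} [Mul M] [Mul N] [FunLike F M N] [MulHomClass F M N] (f : F)
    (S : Set M) (n : ℕ) : f '' setPow S n = setPow (f '' S) n := by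
  induction n with
  | zero => rfl
  | succ n ih => rw [setPow, Set.image_mul, ih]; rfl

theorem image_mulClosure {M N F : Type} [Mul M] [Mul N] [FunLike F M N] [MulHomClass F M N]
    (f : F) (S : Set M) : f '' mulClosure S = mulClosure (f '' S) := by
  simp only [mulClosure, Set.image_iUnion, image_setPow]

end SetPow

section Growth

variable {R : Type} [NonUnitalRing R] [Module ℝ R] [SMulCommClass ℝ R R]
  {X W : Set R} {a q : ℝ}

theorem setPow_smul [IsScalarTower ℝ R R] (r : ℝ) (X : Set R) (n : ℕ) :
    setPow (r • X) n = r ^ (n + 1) • setPow X n := by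
  induction n with
  | zero => rw [zero_add, pow_one]; rfl
  | succ n ih => rw [setPow, ih, smul_mul_smul_comm, ← pow_succ]; rfl

theorem setPow_subset_smul_absConvexHull (hX : X ⊆ a • absConvexHull ℝ W)
    (hXW : ∀ f ∈ X, ∀ w ∈ W, f * w ∈ q • absConvexHull ℝ W) (n : ℕ) :
    setPow X n ⊆ (a * q ^ n) • absConvexHull ℝ W := by
  induction n with
  | zero => rw [pow_zero, mul_one]; exact hX
  | succ n ih =>
    rintro _ hx
    rw [setPow_succ'] at hx
    obtain ⟨f, hf, y, hy, rfl⟩ := hx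
    rw [pow_succ, ← mul_assoc]
    exact (LinearMap.mulLeft ℝ f).map_mem_smul_absConvexHull (hXW f hf) (ih hy)

theorem mulClosure_smul_subset [IsScalarTower ℝ R R] (ha : 0 ≤ a) {r : ℝ} (hr : 0 ≤ r)
    (hr1 : r ≤ 1) (hrq : r * q ≤ 1) (hq : 0 ≤ q)
    (hX : ∀ n, setPow X n ⊆ (a * q ^ n) • absConvexHull ℝ W) :
    mulClosure (r • X) ⊆ a • absConvexHull ℝ W := by
  refine Set.iUnion_subset fun n => ?_
  rw [setPow_smul]
  refine (Set.smul_set_mono (hX n)).trans ?_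
  rw [smul_smul]
  refine smul_absConvexHull_mono (by positivity) ?_
  calc r ^ (n + 1) * (a * q ^ n) = a * (r * (r * q) ^ n) := by ring
    _ ≤ a * (1 * 1) := by gcongr; exact pow_le_one₀ (by positivity) hrq
    _ = a := by ring

end Growth

section SpectralRadius

variable {A₁ A₂ : Type} [Mul A₁] [SMul ℝ A₁] [Mul A₂] [SMul ℝ A₂]
  {small₁ : Set A₁ → Prop} {small₂ : Set A₂ → Prop} {S₁ : Set A₁} {S₂ : Set A₂}

theorem specRadP_le_of_imp
    (h : ∀ t : ℝ, 0 < t →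
      small₂ (mulClosure (t⁻¹ • S₂)) → small₁ (mulClosure (t⁻¹ • S₁))) :
    specRadP small₁ S₁ ≤ specRadP small₂ S₂ :=
  sInf_le_sInf fun _ ⟨t, ht, hr, hs⟩ => ⟨t, ht, hr, h t ht hs⟩

theorem specRadP_le_of_lt (h : ∀ t t' : ℝ, 0 < t → t < t' →
      small₂ (mulClosure (t⁻¹ • S₂)) → small₁ (mulClosure (t'⁻¹ • S₁))) :
    specRadP small₁ S₁ ≤ specRadP small₂ S₂ := by
  refine le_sInf ?_
  rintro _ ⟨t, ht, rfl, hs⟩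
  refine ENNReal.le_of_forall_pos_le_add fun ε hε _ => ?_
  have hε' : (0 : ℝ) < ε := hε
  calc specRadP small₁ S₁ ≤ ENNReal.ofReal (t + ε) :=
        sInf_le ⟨t + ε, by positivity, rfl, h t _ ht (by linarith) hs⟩
    _ = ENNReal.ofReal t + ε := by rw [ENNReal.ofReal_add ht.le hε'.le, ENNReal.ofReal_coe_nnreal]

end SpectralRadius

section TensorAlgebra

variable {C : Type} [NonUnitalRing C] [Module ℝ C] {P Q H H' : Set C} {L : ℕ}

local notation "TC" => TensorAlgebra ℝ C
local notation "ι" => TensorAlgebra.ι ℝ (M := C)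

/-- The curvature `ω(x, y)`, i.e. the form `dx dy`. -/
def curv (x y : C) : TC := ι x * ι y - ι (x * y)

theorem iota_mul_iota (x y : C) : ι x * ι y = ι (x * y) + curv x y := by
  rw [curv, add_sub_cancel]

/-- The Fedosov relation `(dx dy) z = x dy dz + dx d(yz) - d(xy) dz`. -/
theorem curv_mul_iota (x y z : C) :
    curv x y * ι z = ι x * curv y z + (curv x (y * z) - curv (x * y) z) := by
  simp only [curv, mul_sub, sub_mul, mul_assoc]
  abel

theorem curv_smul_left [IsScalarTower ℝ C C] (r : ℝ) (x y : C) :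
    curv (r • x) y = r • curv x y := by
  simp only [curv, map_smul, smul_mul_assoc, smul_sub]

theorem curv_mem_curvSet {x y : C} (hx : x ∈ P) (hy : y ∈ P) : curv x y ∈ curvSet C P :=
  ⟨x, hx, y, hy, rfl⟩

theorem curvSet_mono (h : P ⊆ Q) : curvSet C P ⊆ curvSet C Q := by
  rintro _ ⟨x, hx, y, hy, rfl⟩
  exact ⟨x, h hx, y, h hy, rfl⟩

theorem smul_curvSet_subset [IsScalarTower ℝ C C] (r : ℝ) :
    r • curvSet C P ⊆ curvSet C (P ∪ r • P) := by
  rintro _ ⟨_, ⟨x, hx, y, hy, rfl⟩, rfl⟩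
  exact ⟨r • x, Or.inr (Set.smul_mem_smul_set hx), y, Or.inl hy, (curv_smul_left r x y).symm⟩

/-- Monomials `[H] (dP dP)^L`: a head from `H` (absent only when `L ≠ 0`) followed by `L`
curvatures with entries in `P`. -/
def words (H P : Set C) (L : ℕ) : Set TC :=
  ι '' H * curvSet C P ^ L ∪ {w ∈ curvSet C P ^ L | L ≠ 0}

theorem words_zero (H P : Set C) : words H P 0 = ι '' H := by
  simp [words]

theorem mem_words_of_mem_pow (hL : L ≠ 0) {w : TC} (hw : w ∈ curvSet C P ^ L) :
    w ∈ words H P L :=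
  Or.inr ⟨hw, hL⟩

theorem iota_mul_mem_words {h : C} {w : TC} (hh : h ∈ H) (hw : w ∈ curvSet C P ^ L) :
    ι h * w ∈ words H P L :=
  Or.inl (Set.mul_mem_mul (Set.mem_image_of_mem _ hh) hw)

theorem words_mono (hH : H ⊆ H') (hP : P ⊆ Q) : words H P L ⊆ words H' Q L := by
  have hpow := Set.pow_subset_pow_left (n := L) (curvSet_mono (C := C) hP)
  exact Set.union_subset_union (Set.mul_subset_mul (Set.image_mono hH) hpow)
    fun w hw => ⟨hpow hw.1, hw.2⟩

theorem anSet_eq_iUnion_words (P : Set C) : anSet C P = ⋃ L, words P P L := by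
  rw [← Set.union_iUnion_nat_succ, words_zero]
  simp [anSet, words, setPow_eq_pow]

theorem anSet_mono (h : P ⊆ Q) : anSet C P ⊆ anSet C Q := by
  rw [anSet_eq_iUnion_words, anSet_eq_iUnion_words]
  exact Set.iUnion_mono fun L => words_mono h h

/-- The factor `β ^ L` is absorbed by the first entries of the `L` curvatures. -/
theorem smul_words_subset [IsScalarTower ℝ C C] (β : ℝ) :
    β ^ L • words H P L ⊆ words H (P ∪ β • P) L := by
  have hpow : β ^ L • curvSet C P ^ L ⊆ curvSet C (P ∪ β • P) ^ L := by
    rw [← smul_pow]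
    exact Set.pow_subset_pow_left (smul_curvSet_subset β)
  rintro _ ⟨w, hw | hw, rfl⟩
  · obtain ⟨u, hh, v, hv, rfl⟩ := hw
    change β ^ L • (u * v) ∈ _
    rw [← mul_smul_comm]
    exact Or.inl (Set.mul_mem_mul hh (hpow (Set.smul_mem_smul_set hv)))
  · exact Or.inr ⟨hpow (Set.smul_mem_smul_set hw.1), hw.2⟩

end TensorAlgebra

section Augmentation

variable {C : Type} [NonUnitalRing C] [Module ℝ C] [IsScalarTower ℝ C C] [SMulCommClass ℝ C C]
  {P H : Set C} {L : ℕ} {w : TensorAlgebra ℝ C}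

local notation "TC" => TensorAlgebra ℝ C
local notation "ι" => TensorAlgebra.ι ℝ (M := C)

noncomputable def toUnitization : TC →ₐ[ℝ] Unitization ℝ C :=
  TensorAlgebra.lift ℝ (Unitization.inrHom ℝ ℝ C)

theorem tauC_apply (x : TC) : tauC C x = (toUnitization x).snd := rfl

theorem toUnitization_iota (x : C) : toUnitization (ι x) = x :=
  TensorAlgebra.lift_ι_apply _ _

theorem tauC_iota (x : C) : tauC C (ι x) = x := by
  rw [tauC_apply, toUnitization_iota, Unitization.snd_inr]

theorem toUnitization_curv (x y : C) : toUnitization (curv x y) = 0 := by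
  rw [curv, map_sub, map_mul, toUnitization_iota, toUnitization_iota, toUnitization_iota,
    Unitization.inr_mul, sub_self]

theorem toUnitization_of_mem_words_succ (hw : w ∈ words H P (L + 1)) : toUnitization w = 0 := by
  have hpow : ∀ v ∈ curvSet C P ^ (L + 1), toUnitization v = 0 := by
    rintro _ hv
    rw [pow_succ'] at hv
    obtain ⟨_, ⟨x, -, y, -, rfl⟩, v, -, rfl⟩ := hv
    change toUnitization (curv x y * v) = 0
    rw [map_mul, toUnitization_curv, zero_mul]
  rcases hw with ⟨u, -, v, hv, rfl⟩ | hw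
  · rw [map_mul, hpow v hv, mul_zero]
  · exact hpow w hw.1

theorem toUnitization_mem_of_mem_anSet (hw : w ∈ anSet C P) :
    ∃ x ∈ insert 0 P, toUnitization w = x := by
  rw [anSet_eq_iUnion_words] at hw
  obtain ⟨_ | L, hw⟩ := Set.mem_iUnion.1 hw
  · rw [words_zero] at hw
    obtain ⟨x, hx, rfl⟩ := hw
    exact ⟨x, Or.inr hx, toUnitization_iota x⟩
  · exact ⟨0, Or.inl rfl, by rw [toUnitization_of_mem_words_succ hw, Unitization.inr_zero]⟩

theorem fst_toUnitization_eq_zero {c : ℝ} {x : TC}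
    (hx : x ∈ c • absConvexHull ℝ (anSet C P)) : (toUnitization x).fst = 0 := by
  have hzero : absConvexHull ℝ ({0} : Set ℝ) = {0} :=
    absConvexHull_eq_self.2 ⟨balanced_zero, convex_singleton 0⟩
  have := ((Unitization.fstHom ℝ C).toLinearMap ∘ₗ toUnitization.toLinearMap
    ).map_mem_smul_absConvexHull (b := 1) (Y := {0}) (fun w hw => ?_) hx
  · simpa [hzero] using this
  obtain ⟨y, -, hy⟩ := toUnitization_mem_of_mem_anSet hw
  simp [hzero, hy]

theorem tauC_mem_smul_absConvexHull {c : ℝ} {x : TC}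
    (hx : x ∈ c • absConvexHull ℝ (anSet C P)) :
    tauC C x ∈ c • absConvexHull ℝ (insert 0 P) := by
  simpa using (tauC C).map_mem_smul_absConvexHull (b := 1) (fun w hw => by
    obtain ⟨y, hy, hwy⟩ := toUnitization_mem_of_mem_anSet hw
    rw [tauC_apply, hwy, Unitization.snd_inr]
    exact mem_one_smul_absConvexHull hy) hx

/-- `tauC` is multiplicative on the augmentation ideal. -/
theorem tauC_image_mulClosure {X : Set TC} (hX : ∀ x ∈ X, (toUnitization x).fst = 0) :
    tauC C '' mulClosure X = mulClosure (tauC C '' X) := by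
  have hφ : toUnitization '' X = Unitization.inrNonUnitalAlgHom ℝ C '' (tauC C '' X) := by
    rw [Set.image_image]
    refine Set.image_congr fun x hx => Unitization.ext ?_ rfl
    simpa using hX x hx
  calc tauC C '' mulClosure X
        = Unitization.sndHom ℝ ℝ C '' (toUnitization '' mulClosure X) := by
        rw [Set.image_image]; rfl
    _ = Unitization.sndHom ℝ ℝ C '' (Unitization.inrNonUnitalAlgHom ℝ C ''
          mulClosure (tauC C '' X)) := by
        rw [image_mulClosure toUnitization, hφ, ← image_mulClosure]
    _ = mulClosure (tauC C '' X) := by simp [Set.image_image]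

theorem sub_iota_tauC_mem (h0 : (0 : C) ∈ P) (hw : w ∈ anSet C P) :
    w - ι (tauC C w) ∈ ⋃ m, words P P (m + 1) := by
  rw [anSet_eq_iUnion_words] at hw
  obtain ⟨_ | L, hw⟩ := Set.mem_iUnion.1 hw
  · rw [words_zero] at hw
    obtain ⟨x, -, rfl⟩ := hw
    have hcurv : curv (0 : C) 0 ∈ curvSet C P ^ 1 := by
      rw [pow_one]; exact curv_mem_curvSet h0 h0
    rw [tauC_iota, sub_self, show (0 : TC) = curv 0 0 by simp [curv]]
    exact Set.mem_iUnion.2 ⟨0, mem_words_of_mem_pow one_ne_zero hcurv⟩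
  · rw [tauC_apply, toUnitization_of_mem_words_succ hw, Unitization.snd_zero, map_zero, sub_zero]
    exact Set.mem_iUnion.2 ⟨L, hw⟩

theorem sub_iota_tauC_mem_smul (h0 : (0 : C) ∈ P) {c : ℝ} {x : TC}
    (hx : x ∈ c • absConvexHull ℝ (anSet C P)) :
    x - ι (tauC C x) ∈ c • absConvexHull ℝ (⋃ m, words P P (m + 1)) := by
  have := (LinearMap.id - (ι).comp (tauC C)).map_mem_smul_absConvexHull (b := 1)
    (fun w hw => mem_one_smul_absConvexHull (sub_iota_tauC_mem h0 hw)) hx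
  simpa using this

end Augmentation

section WordPools

variable {C : Type} [Mul C] {F B H P : Set C}

/-- Heads `H` and curvature entries `P` absorbing the products that arise when `ι u` with
`u ∈ B`, or a monomial with entries in `F`, multiplies a monomial `[H](dP dP)^L` from the left. -/
structure WordPools (F B H P : Set C) : Prop where
  F_subset_H : F ⊆ H
  FF_subset_H : F * F ⊆ H
  B_subset_H : B ⊆ H
  BH_subset_H : B * H ⊆ H
  H_subset_P : H ⊆ P
  FH_subset_P : F * H ⊆ P

theorem WordPools.F_subset_P (hp : WordPools F B H P) : F ⊆ P :=
  hp.F_subset_H.trans hp.H_subset_P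

end WordPools

section BoundedPools

variable {C : Type} [Semigroup C] [Bornology C]

theorem exists_wordPools {F B : Set C}
    (hmul : ∀ S T : Set C, IsBounded S → IsBounded T → IsBounded (S * T))
    (hF : IsBounded F) (hB : IsBounded B) (hBB : B * B ⊆ B) :
    ∃ H P, WordPools F B H P ∧ IsBounded P := by
  set F₂ := F ∪ F * F
  set H := F₂ ∪ B ∪ B * F₂
  have hBH : B * H ⊆ H := by
    simp only [H, Set.mul_union, ← mul_assoc]
    exact Set.union_subset (Set.union_subset (Set.subset_union_right) (hBB.trans
      (Set.subset_union_right.trans Set.subset_union_left)))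
      ((Set.mul_subset_mul_right hBB).trans Set.subset_union_right)
  have hH : IsBounded H :=
    ((hF.union (hmul F F hF hF)).union hB).union (hmul B F₂ hB (hF.union (hmul F F hF hF)))
  refine ⟨H, H ∪ F * H, ⟨?_, ?_, ?_, hBH, Set.subset_union_left, Set.subset_union_right⟩,
    hH.union (hmul F H hF hH)⟩
  · exact fun x hx => Or.inl (Or.inl (Or.inl hx))
  · exact fun x hx => Or.inl (Or.inl (Or.inr hx))
  · exact fun x hx => Or.inl (Or.inr hx)

end BoundedPools

section Words

variable {C : Type} [NonUnitalRing C] [Module ℝ C] {F B H P : Set C} {m L : ℕ} {c : ℝ}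
  {g w x z : TensorAlgebra ℝ C}

local notation "TC" => TensorAlgebra ℝ C
local notation "ι" => TensorAlgebra.ι ℝ (M := C)

theorem curv_mul_iota_mul_add (hp : WordPools F B H P) {x y a : C} (hx : x ∈ F) (hy : y ∈ F)
    (ha : a ∈ H) (hw : w ∈ curvSet C P ^ m)
    (hz : z ∈ c • absConvexHull ℝ (curvSet C P ^ m)) (hc : 0 ≤ c) :
    ∃ w' ∈ curvSet C P ^ (m + 1),
      ∃ z' ∈ (c + 2) • absConvexHull ℝ (curvSet C P ^ (m + 1)),
        curv x y * (ι a * w + z) = ι x * w' + z' := by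
  have hP : ∀ {y a}, y ∈ P → a ∈ P → ∀ {w}, w ∈ curvSet C P ^ m →
      curv y a * w ∈ curvSet C P ^ (m + 1) := fun hy ha _ hw => by
    rw [pow_succ']; exact Set.mul_mem_mul (curv_mem_curvSet hy ha) hw
  refine ⟨curv y a * w, hP (hp.F_subset_P hy) (hp.H_subset_P ha) hw,
    curv x y * z + (curv x (y * a) - curv (x * y) a) * w, ?_, ?_⟩
  · have hxy := mem_one_smul_absConvexHull (curv_mem_curvSet (hp.F_subset_P hx) (hp.F_subset_P hy))
    have h₁ := mul_mem_smul_absConvexHull hxy hz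
    rw [one_mul, ← pow_succ'] at h₁
    have h₂ := sub_mem_two_smul_absConvexHull
      (hP (hp.F_subset_P hx) (hp.FH_subset_P (Set.mul_mem_mul hy ha)) hw)
      (hP (hp.H_subset_P (hp.FF_subset_H (Set.mul_mem_mul hx hy))) (hp.H_subset_P ha) hw)
    rw [← sub_mul] at h₂
    exact add_mem_smul_absConvexHull hc zero_le_two h₁ h₂
  · rw [mul_add, ← mul_assoc, curv_mul_iota]
    simp only [add_mul, mul_assoc]
    abel

theorem curvSet_pow_mul_iota (hp : WordPools F B H P) {h : C}
    (hg : g ∈ curvSet C F ^ (m + 1)) (hh : h ∈ H) :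
    ∃ a ∈ F, ∃ w ∈ curvSet C P ^ (m + 1),
      ∃ z ∈ (2 * (m + 1) : ℝ) • absConvexHull ℝ (curvSet C P ^ (m + 1)),
        g * ι h = ι a * w + z := by
  induction m generalizing g with
  | zero =>
    rw [pow_one] at hg
    obtain ⟨x, hx, y, hy, rfl⟩ := hg
    have hz : (0 : TC) ∈ (0 : ℝ) • absConvexHull ℝ (curvSet C P ^ 0) := by simp
    obtain ⟨w', hw', z', hz', he⟩ := curv_mul_iota_mul_add hp hx hy hh Set.one_mem_one hz le_rfl
    refine ⟨x, hx, w', hw', z', by simpa using hz', ?_⟩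
    change curv x y * ι h = _
    simpa using he
  | succ m ih =>
    rw [pow_succ'] at hg
    obtain ⟨_, ⟨x, hx, y, hy, rfl⟩, g, hg, rfl⟩ := hg
    obtain ⟨a, ha, w, hw, z, hz, he⟩ := ih hg
    obtain ⟨w', hw', z', hz', he'⟩ :=
      curv_mul_iota_mul_add hp hx hy (hp.F_subset_H ha) hw hz (by positivity)
    refine ⟨x, hx, w', hw', z', ?_, ?_⟩
    · convert hz' using 2; push_cast; ring
    · change curv x y * g * ι h = _
      rw [mul_assoc, he, he']

theorem curvSet_pow_mul_words (hp : WordPools F B H P) (hg : g ∈ curvSet C F ^ (m + 1))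
    (hx : x ∈ words H P L) :
    (∃ a ∈ F, ∃ w ∈ curvSet C P ^ (L + (m + 1)),
      ∃ z ∈ (2 * (m + 1) : ℝ) • absConvexHull ℝ (curvSet C P ^ (L + (m + 1))),
        g * x = ι a * w + z) ∨ g * x ∈ curvSet C P ^ (L + (m + 1)) := by
  have hgP : g ∈ curvSet C P ^ (m + 1) := Set.pow_subset_pow_left (curvSet_mono hp.F_subset_P) hg
  rw [add_comm L, pow_add]
  rcases hx with ⟨_, ⟨h, hh, rfl⟩, v, hv, rfl⟩ | ⟨hv, -⟩
  · obtain ⟨a, ha, w, hw, z, hz, he⟩ := curvSet_pow_mul_iota hp hg hh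
    refine Or.inl ⟨a, ha, w * v, Set.mul_mem_mul hw hv, z * v, ?_, ?_⟩
    · simpa using mul_mem_smul_absConvexHull hz (mem_one_smul_absConvexHull hv)
    · change g * (ι h * v) = _
      rw [← mul_assoc, he, add_mul, mul_assoc]
  · exact Or.inr (Set.mul_mem_mul hgP hv)

theorem words_mul_words (hp : WordPools F B H P) (hg : g ∈ words F F (m + 1))
    (hx : x ∈ words H P L) :
    g * x ∈ (2 * m + 4 : ℝ) •
      absConvexHull ℝ (words H P (L + (m + 1)) ∪ words H P (L + (m + 2))) := by
  set U := words H P (L + (m + 1)) ∪ words H P (L + (m + 2))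
  have hK : L + (m + 1) ≠ 0 := by omega
  have hone : ∀ {v}, v ∈ U → v ∈ (2 * m + 4 : ℝ) • absConvexHull ℝ U :=
    fun hv => smul_absConvexHull_mono zero_le_one (by linarith [(m.cast_nonneg : (0 : ℝ) ≤ m)])
      (mem_one_smul_absConvexHull hv)
  have hpow : curvSet C P ^ (L + (m + 1)) ⊆ U := fun v hv => Or.inl (mem_words_of_mem_pow hK hv)
  rcases hg with ⟨_, ⟨d, hd, rfl⟩, g, hg, rfl⟩ | ⟨hg, -⟩
  · change ι d * g * x ∈ _
    rw [mul_assoc]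
    rcases curvSet_pow_mul_words hp hg hx with ⟨a, ha, w, hw, z, hz, he⟩ | hgx
    · rw [he, mul_add, ← mul_assoc, iota_mul_iota, add_mul]
      have h₁ : ι (d * a) * w ∈ (1 : ℝ) • absConvexHull ℝ U := mem_one_smul_absConvexHull
        (Or.inl (iota_mul_mem_words (hp.FF_subset_H (Set.mul_mem_mul hd ha)) hw))
      have h₂ : curv d a * w ∈ (1 : ℝ) • absConvexHull ℝ U := by
        refine mem_one_smul_absConvexHull (Or.inr (mem_words_of_mem_pow (by omega) ?_))
        rw [show L + (m + 2) = L + (m + 1) + 1 by omega, pow_succ']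
        exact Set.mul_mem_mul (curv_mem_curvSet (hp.F_subset_P hd) (hp.F_subset_P ha)) hw
      have h₃ : ι d * z ∈ (2 * (m + 1) : ℝ) • absConvexHull ℝ U := by
        have := mul_mem_smul_absConvexHull
          (mem_one_smul_absConvexHull (Set.mem_image_of_mem ι hd)) hz
        rw [one_mul] at this
        refine Set.smul_set_mono (absConvexHull_mono fun v hv => Or.inl ?_) this
        exact words_mono hp.F_subset_H le_rfl (Or.inl hv)
      convert add_mem_smul_absConvexHull (by positivity) (by positivity)
        (add_mem_smul_absConvexHull zero_le_one zero_le_one h₁ h₂) h₃ using 2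
      ring
    · exact hone (Or.inl (iota_mul_mem_words (hp.F_subset_H hd) hgx))
  · rcases curvSet_pow_mul_words hp hg hx with ⟨a, ha, w, hw, z, hz, he⟩ | hgx
    · rw [he]
      refine smul_absConvexHull_mono (by positivity) (by linarith)
        (add_mem_smul_absConvexHull zero_le_one (by positivity)
          (mem_one_smul_absConvexHull (Or.inl (iota_mul_mem_words (hp.F_subset_H ha) hw)))
          (Set.smul_set_mono (absConvexHull_mono hpow) hz))
    · exact hone (hpow hgx)

def weightedWords (H P : Set C) (β : ℝ) : Set TC := ⋃ L, β ^ L • words H P L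

theorem smul_mem_weightedWords {β : ℝ} (hβ : 1 ≤ β) {j k : ℕ} (hjk : j ≤ k)
    (hw : w ∈ words H P (L + k)) :
    β ^ L • w ∈ β⁻¹ ^ j • absConvexHull ℝ (weightedWords H P β) := by
  have hβ₀ : β ≠ 0 := by positivity
  have hmem : β ^ (L + k) • w ∈ weightedWords H P β :=
    Set.mem_iUnion.2 ⟨L + k, Set.smul_mem_smul_set hw⟩
  have he : β ^ L • w = β⁻¹ ^ k • β ^ (L + k) • w := by
    rw [smul_smul, pow_add, inv_pow, mul_comm (β ^ L),
      inv_mul_cancel_left₀ (pow_ne_zero _ hβ₀)]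
  rw [he]
  exact smul_absConvexHull_mono (by positivity)
    (pow_le_pow_of_le_one (by positivity) (inv_le_one_of_one_le₀ hβ) hjk)
    (Set.smul_mem_smul_set (subset_absConvexHull hmem))

theorem weightedWords_subset_anSet [IsScalarTower ℝ C C] (hHP : H ⊆ P) (β : ℝ) :
    weightedWords H P β ⊆ anSet C (P ∪ β • P) := by
  rw [anSet_eq_iUnion_words]
  exact Set.iUnion_mono fun L =>
    (smul_words_subset β).trans (words_mono (hHP.trans Set.subset_union_left) le_rfl)

theorem iota_mul_weightedWords (hp : WordPools F B H P) {β : ℝ} (hβ : 1 ≤ β) {u : C}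
    (hu : u ∈ B) (hx : x ∈ weightedWords H P β) :
    ι u * x ∈ (1 + β⁻¹) • absConvexHull ℝ (weightedWords H P β) := by
  obtain ⟨L, v, hv, rfl⟩ := Set.mem_iUnion.1 hx
  rw [mul_smul_comm]
  rcases hv with ⟨_, ⟨h, hh, rfl⟩, v, hv, rfl⟩ | ⟨hv, -⟩
  · change β ^ L • (ι u * (ι h * v)) ∈ _
    rw [← mul_assoc, iota_mul_iota, add_mul, smul_add]
    have h₀ := smul_mem_weightedWords hβ le_rfl (k := 0)
      (iota_mul_mem_words (hp.BH_subset_H (Set.mul_mem_mul hu hh)) hv)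
    have hcurv : curv u h * v ∈ curvSet C P ^ (L + 1) := by
      rw [pow_succ']
      exact Set.mul_mem_mul (curv_mem_curvSet (hp.H_subset_P (hp.B_subset_H hu))
        (hp.H_subset_P hh)) hv
    have h₁ := smul_mem_weightedWords hβ le_rfl (k := 1)
      (mem_words_of_mem_pow (H := H) (by omega) hcurv)
    simpa using add_mem_smul_absConvexHull zero_le_one (by positivity) h₀ h₁
  · have h₀ := smul_mem_weightedWords hβ le_rfl (k := 0) (L := L)
      (iota_mul_mem_words (hp.B_subset_H hu) hv)
    rw [pow_zero] at h₀
    exact smul_absConvexHull_mono zero_le_one (by simp; positivity) h₀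

theorem two_mul_add_four_mul_inv_pow_le {β : ℝ} (hβ : 2 ≤ β) (m : ℕ) :
    (2 * m + 4) * β⁻¹ ^ (m + 1) ≤ 4 * β⁻¹ := by
  have hβm : (1 : ℝ) + m ≤ β ^ m := by
    have := one_add_mul_le_pow (a := (1 : ℝ)) (by norm_num) m
    calc (1 : ℝ) + m = 1 + m * 1 := by ring
      _ ≤ (1 + 1) ^ m := this
      _ ≤ β ^ m := pow_le_pow_left₀ (by norm_num) (by linarith) m
  have hpos : 0 < β ^ m := by positivity
  rw [pow_succ, inv_pow, ← mul_assoc]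
  gcongr
  rw [mul_inv_le_iff₀ hpos]
  linarith

theorem words_mul_weightedWords (hp : WordPools F B H P) {β : ℝ} (hβ : 2 ≤ β)
    (hg : g ∈ words F F (m + 1)) (hx : x ∈ weightedWords H P β) :
    g * x ∈ (4 * β⁻¹) • absConvexHull ℝ (weightedWords H P β) := by
  obtain ⟨L, v, hv, rfl⟩ := Set.mem_iUnion.1 hx
  rw [mul_smul_comm]
  have hβ₁ : 1 ≤ β := by linarith
  have hmap := (DistribSMul.toLinearMap ℝ TC (β ^ L)).map_mem_smul_absConvexHull
    (b := β⁻¹ ^ (m + 1)) (Y := weightedWords H P β) (fun w hw => ?_) (words_mul_words hp hg hv)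
  · exact smul_absConvexHull_mono (by positivity) (two_mul_add_four_mul_inv_pow_le hβ m) hmap
  rcases hw with hw | hw
  · exact smul_mem_weightedWords hβ₁ le_rfl hw
  · exact smul_mem_weightedWords hβ₁ (Nat.le_succ _) hw

theorem iUnion_words_subset_absConvexHull (hp : WordPools F B H P) {β : ℝ} (hβ : 1 ≤ β) :
    ⋃ m, words F F (m + 1) ⊆ absConvexHull ℝ (weightedWords H P β) := by
  refine Set.iUnion_subset fun m g hg => ?_
  have := smul_mem_weightedWords hβ (j := 0) (L := 0) (Nat.zero_le (m + 1))
    (by rw [zero_add]; exact words_mono hp.F_subset_H hp.F_subset_P hg)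
  simpa using this

theorem mem_smul_absConvexHull_weightedWords [IsScalarTower ℝ C C] [SMulCommClass ℝ C C]
    (hp : WordPools F B H P) {β : ℝ} (hβ : 1 ≤ β) (hc : 0 ≤ c) (h0 : (0 : C) ∈ F)
    (hxB : tauC C x ∈ B) (hx : x ∈ c • absConvexHull ℝ (anSet C F)) :
    x ∈ (1 + c) • absConvexHull ℝ (weightedWords H P β) := by
  rw [← add_sub_cancel (ι (tauC C x)) x]
  have hι : ι (tauC C x) ∈ weightedWords H P β :=
    Set.mem_iUnion.2 ⟨0, by
      simpa [words_zero] using Set.mem_image_of_mem ι (hp.B_subset_H hxB)⟩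
  exact add_mem_smul_absConvexHull zero_le_one hc (mem_one_smul_absConvexHull hι)
    (Set.smul_set_mono (absConvexHull_min (iUnion_words_subset_absConvexHull hp hβ)
      absConvex_absConvexHull) (sub_iota_tauC_mem_smul h0 hx))

theorem mul_mem_smul_absConvexHull_weightedWords [IsScalarTower ℝ C C] [SMulCommClass ℝ C C]
    (hp : WordPools F B H P) {β : ℝ} (hβ : 2 ≤ β) (hc : 0 ≤ c) (h0 : (0 : C) ∈ F)
    (hxB : tauC C x ∈ B) (hx : x ∈ c • absConvexHull ℝ (anSet C F))
    (hw : w ∈ weightedWords H P β) :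
    x * w ∈ (1 + (1 + 4 * c) * β⁻¹) • absConvexHull ℝ (weightedWords H P β) := by
  rw [show x * w = ι (tauC C x) * w + (x - ι (tauC C x)) * w by rw [← add_mul, add_sub_cancel]]
  have hj := (LinearMap.mulRight ℝ w).map_mem_smul_absConvexHull (b := 4 * β⁻¹)
    (Y := weightedWords H P β) (fun g hg => ?_) (sub_iota_tauC_mem_smul h0 hx)
  · rw [LinearMap.mulRight_apply] at hj
    convert add_mem_smul_absConvexHull (by positivity) (by positivity)
      (iota_mul_weightedWords hp (by linarith) hxB hw) hj using 2
    ring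
  obtain ⟨m, hg⟩ := Set.mem_iUnion.1 hg
  exact words_mul_weightedWords hp hβ hg hw

end Words

section Bornology

variable {C : Type} [NonUnitalRing C] [Module ℝ C] [IsScalarTower ℝ C C] [SMulCommClass ℝ C C]
  [Bornology C] {S : Set (TensorAlgebra ℝ C)} {S₀ : Set C} {c t : ℝ}

local notation "ι" => TensorAlgebra.ι ℝ (M := C)

theorem isBounded_mulClosure_tauC
    (hsm : ∀ (r : ℝ) (S : Set C), IsBounded S → IsBounded (r • S))
    (hhull : ∀ S : Set C, IsBounded S → IsBounded (dhull S))
    (hS : S ⊆ c • absConvexHull ℝ (anSet C S₀))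
    (hsmall : SmallTC C (mulClosure (t⁻¹ • S))) :
    IsBounded (mulClosure (t⁻¹ • tauC C '' S)) := by
  obtain ⟨S₂, c₂, hS₂, -, hsub⟩ := hsmall
  have hfst : ∀ x ∈ t⁻¹ • S, (toUnitization x).fst = 0 := by
    rintro _ ⟨s, hs, rfl⟩
    refine fst_toUnitization_eq_zero (c := t⁻¹ * c) (P := S₀) ?_
    rw [← smul_smul]
    exact Set.smul_mem_smul_set (hS hs)
  rw [← image_smul_set, ← tauC_image_mulClosure hfst]
  refine (hsm c₂ _ (hhull _ (hS₂.insert 0))).subset ?_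
  rintro _ ⟨x, hx, rfl⟩
  rw [dhull_eq_absConvexHull] at hsub ⊢
  exact tauC_mem_smul_absConvexHull (hsub hx)

theorem div_mul_one_add_mul_inv_le_one {t t' k β : ℝ} (ht : 0 < t) (htt' : t < t') (hβ : 0 < β)
    (hkβ : k * t / (t' - t) ≤ β) : t / t' * (1 + k * β⁻¹) ≤ 1 := by
  have hkβ' : k * t ≤ β * (t' - t) := (div_le_iff₀ (sub_pos.2 htt')).1 hkβ
  rw [div_mul_eq_mul_div, div_le_one (ht.trans htt')]
  calc t * (1 + k * β⁻¹) = t + k * t * β⁻¹ := by ring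
    _ ≤ t + β * (t' - t) * β⁻¹ := by gcongr
    _ = t' := by field_simp; ring

theorem smallTC_mulClosure_of_isBounded
    (hmul : ∀ S T : Set C, IsBounded S → IsBounded T → IsBounded (S * T))
    (hsm : ∀ (r : ℝ) (S : Set C), IsBounded S → IsBounded (r • S))
    (hS₀ : IsBounded S₀) (hc : 0 < c) (hS : S ⊆ c • absConvexHull ℝ (anSet C S₀))
    (ht : 0 < t) {t' : ℝ} (htt' : t < t') (hB : IsBounded (mulClosure (t⁻¹ • tauC C '' S))) :
    SmallTC C (mulClosure (t'⁻¹ • S)) := by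
  set B := mulClosure (t⁻¹ • tauC C '' S)
  -- `0 ∈ F` makes `0 = ω(0, 0)` a monomial, so `f - ι (τ f)` is a combination of monomials.
  set F := insert (0 : C) S₀
  obtain ⟨H, P, hp, hP⟩ := exists_wordPools hmul (hS₀.insert 0) hB
    (fun _ ⟨x, hx, y, hy, he⟩ => he ▸ mul_mem_mulClosure hx hy)
  set c₁ := t⁻¹ * c
  set β := 2 + (1 + 4 * c₁) * t / (t' - t)
  have hβ : 2 ≤ β := le_add_of_nonneg_right (by positivity)
  have hB : ∀ f ∈ t⁻¹ • S, tauC C f ∈ B := by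
    rintro _ ⟨s, hs, rfl⟩
    exact Set.subset_iUnion (setPow _) 0 ⟨tauC C s, ⟨s, hs, rfl⟩, (map_smul _ _ _).symm⟩
  have hF : ∀ f ∈ t⁻¹ • S, f ∈ c₁ • absConvexHull ℝ (anSet C F) := by
    rintro _ ⟨s, hs, rfl⟩
    rw [← smul_smul]
    exact Set.smul_mem_smul_set
      (Set.smul_set_mono (absConvexHull_mono (anSet_mono (Set.subset_insert 0 S₀))) (hS hs))
  have hgrowth := setPow_subset_smul_absConvexHull
    (fun f hf => mem_smul_absConvexHull_weightedWords hp (by linarith) (by positivity)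
      (Set.mem_insert 0 S₀) (hB f hf) (hF f hf))
    (fun f hf w hw => mul_mem_smul_absConvexHull_weightedWords hp hβ (by positivity)
      (Set.mem_insert 0 S₀) (hB f hf) (hF f hf) hw)
  refine ⟨P ∪ β • P, 1 + c₁, hP.union (hsm β P hP), by positivity, ?_⟩
  rw [dhull_eq_absConvexHull, show t'⁻¹ • S = (t / t') • t⁻¹ • S by
    rw [smul_smul, div_mul_eq_mul_div, mul_inv_cancel₀ ht.ne', one_div]]
  exact (mulClosure_smul_subset (by positivity) (div_nonneg ht.le (ht.trans htt').le)
    ((div_le_one (ht.trans htt')).2 htt'.le)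
    (div_mul_one_add_mul_inv_le_one ht htt' (by positivity) (le_add_of_nonneg_left zero_le_two))
    (by positivity) hgrowth).trans
    (Set.smul_set_mono (absConvexHull_mono (weightedWords_subset_anSet hp.H_subset_P β)))

end Bornology

theorem stmt16
    (hmul : ∀ S T : Set C, IsBounded S → IsBounded T → IsBounded (S * T))
    (hsm : ∀ (r : ℝ) (S : Set C), IsBounded S → IsBounded (r • S))
    (hhull : ∀ S : Set C, IsBounded S → IsBounded (dhull S))
    (S : Set (TensorAlgebra ℝ C)) (hS : SmallTC C S) :
    specRadP (Bornology.IsBounded (α := C)) (tauC C '' S) = specRadP (SmallTC C) S := by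
  obtain ⟨S₀, c, hS₀, hc, hSsub⟩ := hS
  rw [dhull_eq_absConvexHull] at hSsub
  apply le_antisymm
  · refine specRadP_le_of_imp fun t _ hsmall => ?_
    exact isBounded_mulClosure_tauC hsm hhull hSsub hsmall
  · refine specRadP_le_of_lt fun t _ ht htt' hB => ?_
    exact smallTC_mulClosure_of_isBounded hmul hsm hS₀ hc hSsub ht htt' hB
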